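/- Let 0 < \lambda < \mu < 1 and \rho = \lambda(1-\mu)/(\mu(1-\lambda)). If Y is geometric with parameter \lambda on {1,2,...} and W(y) = (1-\mu+\mu\rho)^y/(\mu(1-\rho)), then \sum_{y=1}^\infty y \cdot W(y) \cdot \lambda(1-\lambda)^{y-1} = \lambda(1-\mu) / ((\mu-\lambda)\mu^2). -/

import Mathlib

/-!
Substituting `ρ = λ(1-μ)/(μ(1-λ))` collapses `1 - μ + μρ` to `(1-μ)/(1-λ)` and `μ(1-ρ)` to
`(μ-λ)/(1-λ)`, so the factors `(1-λ)^y` cancel and the series becomes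
`λ(1-μ)/(μ-λ) · ∑ (y+1)(1-μ)^y = λ(1-μ)/(μ-λ) · 1/μ²`.
-/

lemma hasSum_add_one_mul_geometric {𝕜 : Type*} [NormedDivisionRing 𝕜] {r : 𝕜} (hr : ‖r‖ < 1) :
    HasSum (fun n : ℕ ↦ ((n : 𝕜) + 1) * r ^ n) (1 / (1 - r) ^ 2) := by
  convert hasSum_choose_mul_geometric_of_norm_lt_one 1 hr using 2 with n
  simp

section GeoGeoOne

variable {l m : ℝ}

lemma one_sub_add_mul_load (hm : m ≠ 0) (hl : l ≠ 1) :
    1 - m + m * (l * (1 - m) / (m * (1 - l))) = (1 - m) / (1 - l) := by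
  have : 1 - l ≠ 0 := sub_ne_zero.mpr hl.symm
  field_simp
  ring

lemma mul_one_sub_load (hm : m ≠ 0) (hl : l ≠ 1) :
    m * (1 - l * (1 - m) / (m * (1 - l))) = (m - l) / (1 - l) := by
  have : 1 - l ≠ 0 := sub_ne_zero.mpr hl.symm
  field_simp
  ring

lemma add_one_mul_waiting_mul_geometric_eq (hl : l ≠ 1) (y : ℕ) :
    ((y : ℝ) + 1) * (((1 - m) / (1 - l)) ^ (y + 1) / ((m - l) / (1 - l))) * (l * (1 - l) ^ y)
      = l * (1 - m) / (m - l) * (((y : ℝ) + 1) * (1 - m) ^ y) := by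
  have : 1 - l ≠ 0 := sub_ne_zero.mpr hl.symm
  rw [div_pow]
  field_simp
  ring

end GeoGeoOne

/-- With `0 < l < m < 1`, `r = l(1-m)/(m(1-l))` and `W(y) = (1-m+m r)^y/(m(1-r))`,
`∑_{y≥1} y W(y) l (1-l)^(y-1) = l(1-m)/((m-l) m^2)`. -/
theorem stmt_5 (l m : ℝ) (hl : 0 < l) (hlm : l < m) (hm : m < 1) :
    (∑' y : ℕ, ((y : ℝ) + 1) *
        ((1 - m + m * (l * (1 - m) / (m * (1 - l)))) ^ (y + 1) /
          (m * (1 - l * (1 - m) / (m * (1 - l))))) *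
        (l * (1 - l) ^ y))
      = l * (1 - m) / ((m - l) * m ^ 2) := by
  have hm0 : m ≠ 0 := (hl.trans hlm).ne'
  have hl1 : l ≠ 1 := (hlm.trans hm).ne
  have hnorm : ‖1 - m‖ < 1 := by
    rw [Real.norm_eq_abs, abs_lt]
    constructor <;> linarith
  simp_rw [one_sub_add_mul_load hm0 hl1, mul_one_sub_load hm0 hl1,
    add_one_mul_waiting_mul_geometric_eq hl1]
  rw [tsum_mul_left, (hasSum_add_one_mul_geometric hnorm).tsum_eq, sub_sub_cancel]
  field_simp
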